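/- arXiv:1611.05811 — 2 statements merged into one kernel-verified Lean document; each statement's English description precedes it below -/
import Mathlib

section
/- Let G be a finite group, k ≥ 3 an integer, and Θ a finite group acting on G by automorphisms, with Θ acting on G^{k−1} coordinatewise. Set ΘS(ḡ) := Σ_{θ∈Θ} S(θ(g₁),…,θ(g_{k−1})) in A_k(G). Then for all ḡ = (g₁,…,g_{k−1}) and h̄ = (h₁,…,h_{k−1}) in G^{k−1}: ΘS(ḡ)·ΘS(h̄) = |G|^{(⌈k/2⌉−1)/2} · Σ_{θ″∈Θ} (∏_{i=2}^{⌈k/2⌉} δ(h₁·θ″(g_{k+1−i}), h_i)) · ΘS(h₁θ″(g₁), h₁θ″(g₂), …, h₁θ″(g_{⌈k/2⌉}), h_{⌈k/2⌉+1}, …, h_{k−1}). -/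
open Finset

noncomputable section

/-- 1-indexed access into a `(k-1)`-tuple, with default value `1` out of range. -/
def idx1 {H : Type*} [One H] (k : ℕ) (v : Fin (k - 1) → H) (j : ℕ) : H :=
  if h : j - 1 < k - 1 then v ⟨j - 1, h⟩ else 1

/-- The product of two basis vectors `S(x̄)·S(ȳ)` of the `k`-box space `A_k(H)` of the
group planar algebra `P(H)` (Fact 4.4 of the paper):
`S(x̄)·S(ȳ) = |H|^{(⌈k/2⌉−1)/2} · ∏_{i=2}^{⌈k/2⌉} δ(y₁·x_{k+1−i}, y_i) ·
  S(y₁x₁, …, y₁x_{⌈k/2⌉}, y_{⌈k/2⌉+1}, …, y_{k−1})`. -/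
def basisMul {H : Type*} [Group H] [Fintype H] [DecidableEq H] (k : ℕ)
    (x y : Fin (k - 1) → H) : (Fin (k - 1) → H) →₀ ℂ :=
  ((((Fintype.card H : ℝ) ^ (((((k + 1) / 2 : ℕ) : ℝ) - 1) / 2) : ℝ) : ℂ) *
      ∏ i ∈ Finset.Icc 2 ((k + 1) / 2),
        (if idx1 k y 1 * idx1 k x (k + 1 - i) = idx1 k y i then (1 : ℂ) else 0)) •
    Finsupp.single
      (fun j : Fin (k - 1) =>
        if (j : ℕ) + 1 ≤ (k + 1) / 2 then idx1 k y 1 * x j else y j) (1 : ℂ)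

/-- The bilinear product on the `k`-box space `A_k(H) = ℂ[H^{k−1}]`, extending
`basisMul` bilinearly. -/
def mulAk {H : Type*} [Group H] [Fintype H] [DecidableEq H] (k : ℕ)
    (a b : (Fin (k - 1) → H) →₀ ℂ) : (Fin (k - 1) → H) →₀ ℂ :=
  a.sum fun x ca => b.sum fun y cb => (ca * cb) • basisMul k x y

/-- The `Θ`-orbit sum `ΘS(ḡ) = Σ_{θ∈Θ} S(θ(g₁),…,θ(g_{k−1})) ∈ A_k(G)`. -/
def thetaS {G Θ : Type*} [Group G] [Group Θ] [Fintype Θ] (φ : Θ →* MulAut G)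
    (k : ℕ) (g : Fin (k - 1) → G) : (Fin (k - 1) → G) →₀ ℂ :=
  ∑ θ : Θ, Finsupp.single (fun j => φ θ (g j)) (1 : ℂ)

/-!
Expanding both orbit sums bilinearly gives `Σ_{θ,θ'} S(θ ḡ)·S(θ' h̄)`. The basis product is
equivariant under automorphisms of `G` applied to both factors, so after substituting
`θ = θ' θ''` each term is `θ'` applied to `S(θ'' ḡ)·S(h̄)`; summing over `θ'` then
reassembles orbit sums `ΘS`.
-/

lemma idx1_comp {G H F : Type*} [One G] [One H] [FunLike F G H] [OneHomClass F G H]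
    (f : F) (k : ℕ) (v : Fin (k - 1) → G) (i : ℕ) :
    idx1 k (fun j => f (v j)) i = f (idx1 k v i) := by
  unfold idx1
  split <;> simp

section mulAk

variable {H : Type*} [Group H] [Fintype H] [DecidableEq H] (k : ℕ)

lemma mulAk_single_single (x y : Fin (k - 1) → H) (a b : ℂ) :
    mulAk k (Finsupp.single x a) (Finsupp.single y b) = (a * b) • basisMul k x y := by
  simp [mulAk]

lemma mulAk_finsetSum_left {ι : Type*} (s : Finset ι) (a : ι → (Fin (k - 1) → H) →₀ ℂ)
    (b : (Fin (k - 1) → H) →₀ ℂ) :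
    mulAk k (∑ i ∈ s, a i) b = ∑ i ∈ s, mulAk k (a i) b :=
  (Finsupp.sum_finsetSum_index (by simp) fun _ _ _ => by
    simp only [add_mul, add_smul, Finsupp.sum_add]).symm

lemma mulAk_finsetSum_right {ι : Type*} (s : Finset ι) (a : (Fin (k - 1) → H) →₀ ℂ)
    (b : ι → (Fin (k - 1) → H) →₀ ℂ) :
    mulAk k a (∑ i ∈ s, b i) = ∑ i ∈ s, mulAk k a (b i) := by
  simp only [mulAk]
  rw [← Finsupp.sum_finsetSum_comm]
  refine Finsupp.sum_congr fun _ _ => ?_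
  exact (Finsupp.sum_finsetSum_index (by simp) fun _ _ _ => by
    simp only [mul_add, add_smul]).symm

lemma basisMul_mulAut (σ : MulAut H) (x y : Fin (k - 1) → H) :
    basisMul k (fun j => σ (x j)) (fun j => σ (y j)) =
      Finsupp.mapDomain (fun v j => σ (v j)) (basisMul k x y) := by
  unfold basisMul
  rw [Finsupp.mapDomain_smul, Finsupp.mapDomain_single]
  congr 3
  · funext i
    simp only [idx1_comp, ← map_mul σ, σ.injective.eq_iff]
  · funext j
    simp only [idx1_comp, apply_ite σ, map_mul]

end mulAk

lemma mulAk_thetaS_thetaS {G Θ : Type*} [Group G] [Fintype G] [DecidableEq G]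
    [Group Θ] [Fintype Θ] (φ : Θ →* MulAut G) (k : ℕ) (g h : Fin (k - 1) → G) :
    mulAk k (thetaS φ k g) (thetaS φ k h) =
      ∑ θ' : Θ, ∑ θ : Θ, basisMul k (fun j => φ θ (g j)) (fun j => φ θ' (h j)) := by
  simp only [thetaS, mulAk_finsetSum_left, mulAk_finsetSum_right, mulAk_single_single,
    one_mul, one_smul]

theorem thetaS_mul_general {G Θ : Type*} [Group G] [Fintype G] [DecidableEq G]
    [Group Θ] [Fintype Θ] (φ : Θ →* MulAut G) (k : ℕ)
    (g h : Fin (k - 1) → G) :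
    mulAk k (thetaS φ k g) (thetaS φ k h) =
      ((((Fintype.card G : ℝ) ^ (((((k + 1) / 2 : ℕ) : ℝ) - 1) / 2) : ℝ) : ℂ) •
        ∑ θ'' : Θ,
          (∏ i ∈ Finset.Icc 2 ((k + 1) / 2),
            (if idx1 k h 1 * φ θ'' (idx1 k g (k + 1 - i)) = idx1 k h i
              then (1 : ℂ) else 0)) •
          thetaS φ k (fun j : Fin (k - 1) =>
            if (j : ℕ) + 1 ≤ (k + 1) / 2 then idx1 k h 1 * φ θ'' (g j) else h j)) := by
  calc mulAk k (thetaS φ k g) (thetaS φ k h)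
      = ∑ θ' : Θ, ∑ θ'' : Θ,
          basisMul k (fun j => φ (θ' * θ'') (g j)) (fun j => φ θ' (h j)) := by
        rw [mulAk_thetaS_thetaS]
        refine Finset.sum_congr rfl fun θ' _ => ?_
        exact (Equiv.sum_comp (Equiv.mulLeft θ')
          fun θ => basisMul k (fun j => φ θ (g j)) (fun j => φ θ' (h j))).symm
    _ = ∑ θ' : Θ, ∑ θ'' : Θ, Finsupp.mapDomain (fun v j => φ θ' (v j))
          (basisMul k (fun j => φ θ'' (g j)) h) := by
        simp only [map_mul, MulAut.mul_apply, basisMul_mulAut]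
    _ = _ := by
        rw [Finset.sum_comm]
        simp only [basisMul, idx1_comp, Finsupp.mapDomain_smul, Finsupp.mapDomain_single,
          thetaS, ← Finset.smul_sum]
        rw [Finset.smul_sum]
        simp only [mul_smul]

/-- **Fact 4.5 of the paper**: the multiplication rule for the `Θ`-orbit sums
`ΘS(ḡ)` in the `k`-box space `A_k(G)` of the group planar algebra. -/
theorem thetaS_mul {G Θ : Type*} [Group G] [Fintype G] [DecidableEq G]
    [Group Θ] [Fintype Θ] (φ : Θ →* MulAut G) (k : ℕ) (hk : 3 ≤ k)
    (g h : Fin (k - 1) → G) :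
    mulAk k (thetaS φ k g) (thetaS φ k h) =
      ((((Fintype.card G : ℝ) ^ (((((k + 1) / 2 : ℕ) : ℝ) - 1) / 2) : ℝ) : ℂ) •
        ∑ θ'' : Θ,
          (∏ i ∈ Finset.Icc 2 ((k + 1) / 2),
            (if idx1 k h 1 * φ θ'' (idx1 k g (k + 1 - i)) = idx1 k h i
              then (1 : ℂ) else 0)) •
          thetaS φ k (fun j : Fin (k - 1) =>
            if (j : ℕ) + 1 ≤ (k + 1) / 2 then idx1 k h 1 * φ θ'' (g j) else h j)) :=
  thetaS_mul_general φ k g h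
end
end

section
/- Let G be a finite group and Θ a finite group acting on G by automorphisms, and let G⋊Θ denote the semidirect product with multiplication (g₁,θ₁)(g₂,θ₂) = (g₁·θ₁(g₂), θ₁θ₂). In ℂ[G] set ΘS(g) := Σ_{θ∈Θ} e_{θ(g)}, and in ℂ[G⋊Θ] set U(g) := Σ_{θ∈Θ} Σ_{γ∈Θ} e_{(θ(g),γ)}. Then there is a unique ℂ-linear map Φ₂ from the span of {ΘS(g) : g ∈ G} in ℂ[G] into ℂ[G⋊Θ] with Φ₂(ΘS(g)) = |Θ|^{−1} U(g) for all g ∈ G; moreover the span of the ΘS(g) is closed under multiplication in ℂ[G], and Φ₂ is multiplicative: Φ₂(x·y) = Φ₂(x)·Φ₂(y) for all x, y in that span. -/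
open Finset

noncomputable section

/-- The `Θ`-orbit sum `ΘS(g) = Σ_{θ∈Θ} e_{θ(g)}` in the group algebra `ℂ[G]`. -/
def thetaS2 {G Θ : Type*} [Group G] [Group Θ] [Fintype Θ] (φ : Θ →* MulAut G)
    (g : G) : MonoidAlgebra ℂ G :=
  ∑ θ : Θ, MonoidAlgebra.single (φ θ g) (1 : ℂ)

/-- `U(g) = Σ_{θ∈Θ} Σ_{γ∈Θ} e_{(θ(g),γ)}` in the group algebra `ℂ[G⋊Θ]`. -/
def Uel2 {G Θ : Type*} [Group G] [Group Θ] [Fintype Θ] (φ : Θ →* MulAut G)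
    (g : G) : MonoidAlgebra ℂ (G ⋊[φ] Θ) :=
  ∑ θ : Θ, ∑ γ : Θ, MonoidAlgebra.single (⟨φ θ g, γ⟩ : G ⋊[φ] Θ) (1 : ℂ)

/-! Write `ι : ℂ[G] → ℂ[G⋊Θ]` for the algebra map induced by `G ↪ G⋊Θ` and `T = Σ_γ e_{(1,γ)}`.
Then `ι(ΘS(g)) T = U(g)`, so `Φ₂ a = |Θ|⁻¹ ι(a) T`. Since `T² = |Θ| T`, this map is multiplicative
on the elements `b` with `T ι(b) = ι(b) T`; as `e_{(1,γ)} e_{(x,1)} = e_{(γ(x),1)} e_{(1,γ)}`, these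
include the Θ-invariant elements, in particular the span of the `ΘS(g)`. That span is closed under
multiplication because `ΘS(g) ΘS(h) = Σ_δ ΘS(g δ(h))`. -/

theorem inv_smul_mul_mul_of_commute {R A : Type*} [Field R] [Semiring A] [Algebra R A]
    {n : R} {t : A} (hn : n ≠ 0) (ht : t * t = n • t) (a : A) {b : A} (hb : Commute t b) :
    n⁻¹ • (a * b * t) = n⁻¹ • (a * t) * n⁻¹ • (b * t) := by
  calc n⁻¹ • (a * b * t) = (n⁻¹ * n⁻¹) • (a * b * (n • t)) := by
        rw [mul_smul_comm, smul_smul, mul_assoc n⁻¹, inv_mul_cancel₀ hn, mul_one]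
    _ = n⁻¹ • (a * t) * n⁻¹ • (b * t) := by
        rw [← ht, smul_mul_smul_comm, mul_assoc a t, ← mul_assoc t b, hb.eq]
        simp only [mul_assoc]

theorem LinearMap.ext_of_span_range {R M N ι : Type*} [Semiring R] [AddCommMonoid M]
    [Module R M] [AddCommMonoid N] [Module R N] {v : ι → M}
    {f g : Submodule.span R (Set.range v) →ₗ[R] N}
    (h : ∀ i, f ⟨v i, Submodule.subset_span (Set.mem_range_self i)⟩ =
      g ⟨v i, Submodule.subset_span (Set.mem_range_self i)⟩) : f = g :=
  LinearMap.ext_on Submodule.span_span_coe_preimage <| by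
    rintro ⟨_, _⟩ ⟨i, rfl⟩
    exact h i

theorem SemidirectProduct.inr_mul_inl {N H : Type*} [Group N] [Group H] (φ : H →* MulAut N)
    (h : H) (n : N) : (inr h * inl n : N ⋊[φ] H) = inl (φ h n) * inr h := by
  ext <;> simp

section

open MonoidAlgebra SemidirectProduct

variable {G Θ : Type*} [Group G] [Group Θ] [Fintype Θ] (φ : Θ →* MulAut G)

abbrev inlAlg : MonoidAlgebra ℂ G →ₐ[ℂ] MonoidAlgebra ℂ (G ⋊[φ] Θ) :=
  mapDomainAlgHom ℂ ℂ inl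

def thetaSum : MonoidAlgebra ℂ (G ⋊[φ] Θ) := ∑ γ : Θ, single (inr γ) 1

theorem thetaSum_mul_self : thetaSum φ * thetaSum φ = (Fintype.card Θ : ℂ) • thetaSum φ := by
  have hrow (γ : Θ) : ∑ δ : Θ, single (inr γ * inr δ : G ⋊[φ] Θ) (1 : ℂ) = thetaSum φ := by
    rw [thetaSum]
    conv_rhs => rw [← Equiv.sum_comp (Equiv.mulLeft γ)]
    simp only [Equiv.coe_mulLeft, map_mul]
  calc thetaSum φ * thetaSum φ = ∑ γ : Θ, ∑ δ : Θ, single (inr γ * inr δ : G ⋊[φ] Θ) (1 : ℂ) := by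
        simp only [thetaSum, Finset.sum_mul_sum, single_mul_single, one_mul]
    _ = (Fintype.card Θ : ℂ) • thetaSum φ := by
        simp [hrow, ← Nat.cast_smul_eq_nsmul ℂ]

theorem inlAlg_thetaS2_mul_thetaSum (g : G) :
    inlAlg φ (thetaS2 φ g) * thetaSum φ = Uel2 φ g := by
  simp [thetaS2, Uel2, thetaSum, Finset.sum_mul_sum, mk_eq_inl_mul_inr]

theorem commute_thetaSum_inlAlg_thetaS2 (g : G) :
    Commute (thetaSum φ) (inlAlg φ (thetaS2 φ g)) := by
  have hrow (γ : Θ) : ∑ θ : Θ, single (inl (φ θ g) * inr γ : G ⋊[φ] Θ) (1 : ℂ) =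
      ∑ θ : Θ, single (inr γ * inl (φ θ g) : G ⋊[φ] Θ) (1 : ℂ) := by
    rw [← Equiv.sum_comp (Equiv.mulLeft γ)]
    simp only [Equiv.coe_mulLeft, inr_mul_inl, map_mul, MulAut.mul_apply]
  simp only [Commute, SemiconjBy, thetaSum, thetaS2, map_sum, mapDomainAlgHom_apply,
    mapDomain_single, Finset.sum_mul_sum, single_mul_single, one_mul]
  conv_rhs => rw [Finset.sum_comm]
  exact Finset.sum_congr rfl fun γ _ => (hrow γ).symm

theorem thetaS2_mul_thetaS2 (g h : G) :
    thetaS2 φ g * thetaS2 φ h = ∑ δ : Θ, thetaS2 φ (g * φ δ h) := by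
  have hrow (θ : Θ) : ∑ γ : Θ, single (φ θ g * φ γ h) (1 : ℂ) =
      ∑ δ : Θ, single (φ θ (g * φ δ h)) (1 : ℂ) := by
    rw [← Equiv.sum_comp (Equiv.mulLeft θ)]
    simp only [Equiv.coe_mulLeft, map_mul, MulAut.mul_apply]
  simp only [thetaS2, Finset.sum_mul_sum, single_mul_single, one_mul]
  conv_rhs => rw [Finset.sum_comm]
  exact Finset.sum_congr rfl fun θ _ => hrow θ

def phiTwo : MonoidAlgebra ℂ G →ₗ[ℂ] MonoidAlgebra ℂ (G ⋊[φ] Θ) :=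
  (Fintype.card Θ : ℂ)⁻¹ • (LinearMap.mulRight ℂ (thetaSum φ) ∘ₗ (inlAlg φ).toLinearMap)

theorem phiTwo_apply (a : MonoidAlgebra ℂ G) :
    phiTwo φ a = (Fintype.card Θ : ℂ)⁻¹ • (inlAlg φ a * thetaSum φ) := rfl

theorem phiTwo_thetaS2 (g : G) :
    phiTwo φ (thetaS2 φ g) = (Fintype.card Θ : ℂ)⁻¹ • Uel2 φ g := by
  rw [phiTwo_apply, inlAlg_thetaS2_mul_thetaSum]

theorem mul_mem_span_range_thetaS2 {x y : MonoidAlgebra ℂ G}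
    (hx : x ∈ Submodule.span ℂ (Set.range (thetaS2 φ)))
    (hy : y ∈ Submodule.span ℂ (Set.range (thetaS2 φ))) :
    x * y ∈ Submodule.span ℂ (Set.range (thetaS2 φ)) := by
  refine Submodule.mul_le.mp ?_ x hx y hy
  rw [Submodule.span_mul_span, Submodule.span_le]
  rintro _ ⟨_, ⟨g, rfl⟩, _, ⟨h, rfl⟩, rfl⟩
  change thetaS2 φ g * thetaS2 φ h ∈ _
  rw [thetaS2_mul_thetaS2]
  exact Submodule.sum_mem _ fun δ _ => Submodule.subset_span (Set.mem_range_self _)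

theorem commute_thetaSum_inlAlg_of_mem_span {b : MonoidAlgebra ℂ G}
    (hb : b ∈ Submodule.span ℂ (Set.range (thetaS2 φ))) :
    Commute (thetaSum φ) (inlAlg φ b) := by
  induction hb using Submodule.span_induction with
  | mem _ hx =>
    obtain ⟨g, rfl⟩ := hx
    exact commute_thetaSum_inlAlg_thetaS2 φ g
  | zero => rw [map_zero]; exact Commute.zero_right _
  | add _ _ _ _ hx hy => rw [map_add]; exact hx.add_right hy
  | smul c _ _ hx => rw [map_smul]; exact hx.smul_right c

theorem phiTwo_mul (a : MonoidAlgebra ℂ G) {b : MonoidAlgebra ℂ G}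
    (hb : b ∈ Submodule.span ℂ (Set.range (thetaS2 φ))) :
    phiTwo φ (a * b) = phiTwo φ a * phiTwo φ b := by
  simp only [phiTwo_apply, map_mul]
  exact inv_smul_mul_mul_of_commute (Nat.cast_ne_zero.mpr Fintype.card_ne_zero)
    (thetaSum_mul_self φ) _ (commute_thetaSum_inlAlg_of_mem_span φ hb)

end

theorem phi_two_exists_unique_multiplicative_general {G Θ : Type*} [Group G]
    [Group Θ] [Fintype Θ] (φ : Θ →* MulAut G) :
    (∀ x ∈ Submodule.span ℂ (Set.range (thetaS2 φ)),
      ∀ y ∈ Submodule.span ℂ (Set.range (thetaS2 φ)),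
        x * y ∈ Submodule.span ℂ (Set.range (thetaS2 φ))) ∧
    ∃ Φ : (Submodule.span ℂ (Set.range (thetaS2 φ))) →ₗ[ℂ]
        MonoidAlgebra ℂ (G ⋊[φ] Θ),
      (∀ g : G,
        Φ ⟨thetaS2 φ g, Submodule.subset_span (Set.mem_range_self g)⟩ =
          ((Fintype.card Θ : ℂ))⁻¹ • Uel2 φ g) ∧
      (∀ Φ' : (Submodule.span ℂ (Set.range (thetaS2 φ))) →ₗ[ℂ]
          MonoidAlgebra ℂ (G ⋊[φ] Θ),
        (∀ g : G,
          Φ' ⟨thetaS2 φ g, Submodule.subset_span (Set.mem_range_self g)⟩ =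
            ((Fintype.card Θ : ℂ))⁻¹ • Uel2 φ g) → Φ' = Φ) ∧
      (∀ (x y : Submodule.span ℂ (Set.range (thetaS2 φ)))
        (hxy : x.val * y.val ∈ Submodule.span ℂ (Set.range (thetaS2 φ))),
        Φ ⟨x.val * y.val, hxy⟩ = Φ x * Φ y) :=
  ⟨fun _ hx _ hy => mul_mem_span_range_thetaS2 φ hx hy,
    phiTwo φ ∘ₗ (Submodule.span ℂ (Set.range (thetaS2 φ))).subtype,
    phiTwo_thetaS2 φ,
    fun _ hΦ' => LinearMap.ext_of_span_range fun g => (hΦ' g).trans (phiTwo_thetaS2 φ g).symm,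
    fun x y _ => phiTwo_mul φ x y.2⟩

/-- **Theorem 4.10 / Definition 4.9 of the paper, case `k = 2`**: the span of the
`ΘS(g)` in `ℂ[G]` is closed under multiplication, there is a unique `ℂ`-linear map
`Φ₂` on this span with `Φ₂(ΘS(g)) = |Θ|⁻¹·U(g)`, and `Φ₂` is multiplicative. -/
theorem phi_two_exists_unique_multiplicative {G Θ : Type*} [Group G] [Fintype G]
    [Group Θ] [Fintype Θ] (φ : Θ →* MulAut G) :
    (∀ x ∈ Submodule.span ℂ (Set.range (thetaS2 φ)),
      ∀ y ∈ Submodule.span ℂ (Set.range (thetaS2 φ)),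
        x * y ∈ Submodule.span ℂ (Set.range (thetaS2 φ))) ∧
    ∃ Φ : (Submodule.span ℂ (Set.range (thetaS2 φ))) →ₗ[ℂ]
        MonoidAlgebra ℂ (G ⋊[φ] Θ),
      (∀ g : G,
        Φ ⟨thetaS2 φ g, Submodule.subset_span (Set.mem_range_self g)⟩ =
          ((Fintype.card Θ : ℂ))⁻¹ • Uel2 φ g) ∧
      (∀ Φ' : (Submodule.span ℂ (Set.range (thetaS2 φ))) →ₗ[ℂ]
          MonoidAlgebra ℂ (G ⋊[φ] Θ),
        (∀ g : G,
          Φ' ⟨thetaS2 φ g, Submodule.subset_span (Set.mem_range_self g)⟩ =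
            ((Fintype.card Θ : ℂ))⁻¹ • Uel2 φ g) → Φ' = Φ) ∧
      (∀ (x y : Submodule.span ℂ (Set.range (thetaS2 φ)))
        (hxy : x.val * y.val ∈ Submodule.span ℂ (Set.range (thetaS2 φ))),
        Φ ⟨x.val * y.val, hxy⟩ = Φ x * Φ y) :=
  phi_two_exists_unique_multiplicative_general φ

end
end
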